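/- arXiv:2508.15363 — 5 statements merged into one kernel-verified Lean document; each statement's English description precedes it below -/
import Mathlib

section
/- If for each j = 1,...,n the p-value P_j satisfies Pr(P_j ≤ t) ≤ t for all t ∈ [0,1] whenever the hypothesis H_j is true, the P_j are mutually independent, and fewer than u of the hypotheses H_1,...,H_n are false, then the Bonferroni-combined statistic (n − u + 1)·P_(u), where P_(u) is the u-th order statistic of P_1,...,P_n, satisfies Pr((n − u + 1)·P_(u) ≤ t) ≤ t for all t ∈ [0,1]. -/
open MeasureTheory Finset

/-!
On the event `(n - u + 1) · P_(u) ≤ t`, at least `u` of the p-values are `≤ t / (n - u + 1)`.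
Since at least `n - u + 1` hypotheses are true, some of those `u` p-values belong to a fixed set
`T` of `n - u + 1` true nulls, so the event is contained in `⋃ j ∈ T, {P j ≤ t / (n - u + 1)}`,
and the union bound gives probability at most `#T · t / (n - u + 1) = t`.
-/

theorem exists_mem_le_of_monotone_perm {α : Type*} [Preorder α] {n : ℕ} {x y : Fin n → α}
    (hy : Monotone y) (hxy : ∃ σ : Equiv.Perm (Fin n), ∀ j, y j = x (σ j)) (k : Fin n)
    {T : Finset (Fin n)} (hT : n ≤ k + #T) : ∃ j ∈ T, x j ≤ y k := by
  obtain ⟨σ, hσ⟩ := hxy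
  have hcard : #((Iic k).image σ) = k + 1 := by
    rw [card_image_of_injective _ σ.injective, Fin.card_Iic]
  obtain ⟨j, hj⟩ : ((Iic k).image σ ∩ T).Nonempty := by
    rw [← card_pos]
    have := card_inter_add_card_union ((Iic k).image σ) T
    have := card_le_univ ((Iic k).image σ ∪ T)
    simp only [Fintype.card_fin] at this
    omega
  obtain ⟨hjA, hjT⟩ := mem_inter.mp hj
  obtain ⟨i, hi, rfl⟩ := mem_image.mp hjA
  exact ⟨σ i, hjT, hσ i ▸ hy (mem_Iic.mp hi)⟩

theorem exists_finset_card_eq_of_card_filter_not_lt {ι : Type*} [Fintype ι] {p : ι → Prop}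
    [DecidablePred p] {u : ℕ} (h : #(univ.filter fun j => ¬ p j) < u) :
    ∃ T : Finset ι, (∀ j ∈ T, p j) ∧ #T = Fintype.card ι - (u - 1) := by
  have hsplit := card_filter_add_card_filter_not (s := univ) p
  rw [card_univ] at hsplit
  obtain ⟨T, hTsub, hTcard⟩ :=
    exists_subset_card_eq (s := univ.filter p) (n := Fintype.card ι - (u - 1)) (by omega)
  exact ⟨T, fun j hj => (mem_filter.mp (hTsub hj)).2, hTcard⟩

theorem measure_le_card_mul_of_subset_biUnion {Ω ι : Type*} [MeasurableSpace Ω] {μ : Measure Ω}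
    {E : Set Ω} {S : ι → Set Ω} {ε : ENNReal} (T : Finset ι) (hE : E ⊆ ⋃ j ∈ T, S j)
    (hS : ∀ j ∈ T, μ (S j) ≤ ε) : μ E ≤ #T * ε :=
  calc μ E ≤ ∑ j ∈ T, μ (S j) := (measure_mono hE).trans (measure_biUnion_finset_le T S)
    _ ≤ #T • ε := sum_le_card_nsmul T _ ε hS
    _ = #T * ε := nsmul_eq_mul _ _

theorem natCast_mul_ofReal_div {m : ℕ} (hm : m ≠ 0) (t : ℝ) :
    (m : ENNReal) * ENNReal.ofReal (t / m) = ENNReal.ofReal t := by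
  rw [← ENNReal.ofReal_natCast m, ← ENNReal.ofReal_mul (Nat.cast_nonneg m)]
  congr 1
  field_simp

/-- Validity of the Bonferroni-combined PC p-value: if the `P j` are independent,
valid under their true nulls, and fewer than `u` of the hypotheses are false,
then `Pr((n−u+1)·P_(u) ≤ t) ≤ t` for all `t ∈ [0,1]`. Here `Q` denotes the
order statistics of `P`: for each `ω`, `j ↦ Q j ω` is monotone and is a
rearrangement of `j ↦ P j ω`. -/
theorem stmt_0 {Ω : Type*} [MeasurableSpace Ω] (μ : Measure Ω)
    (n : ℕ) (u : ℕ) (hu2 : 2 ≤ u)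
    (hun : u ≤ n)
    (P : Fin n → Ω → ℝ)
    (trueH : Fin n → Prop) [DecidablePred trueH]
    (hvalid : ∀ j, trueH j → ∀ t ∈ Set.Icc (0:ℝ) 1,
      μ {ω | P j ω ≤ t} ≤ ENNReal.ofReal t)
    (hPC : (Finset.univ.filter (fun j => ¬ trueH j)).card < u)
    (Q : Fin n → Ω → ℝ)
    (hQmono : ∀ ω, Monotone (fun j => Q j ω))
    (hQperm : ∀ ω, ∃ σ : Equiv.Perm (Fin n), ∀ j, Q j ω = P (σ j) ω) :
    ∀ t ∈ Set.Icc (0:ℝ) 1,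
      μ {ω | ((n : ℝ) - u + 1) * Q ⟨u - 1, by omega⟩ ω ≤ t} ≤ ENNReal.ofReal t := by
  rintro t ⟨ht0, ht1⟩
  obtain ⟨T, hTtrue, hTcard⟩ := exists_finset_card_eq_of_card_filter_not_lt hPC
  rw [Fintype.card_fin] at hTcard
  set m := n - (u - 1)
  have hm : (1 : ℝ) ≤ m := by norm_cast; omega
  have hmr : (n : ℝ) - u + 1 = m := by rw [Nat.cast_sub (by omega), Nat.cast_sub (by omega)]; push_cast; ring
  have hs : t / m ∈ Set.Icc (0 : ℝ) 1 :=
    ⟨div_nonneg ht0 (by positivity), (div_le_self ht0 hm).trans ht1⟩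
  have hevent : {ω | ((n : ℝ) - u + 1) * Q ⟨u - 1, by omega⟩ ω ≤ t} ⊆
      ⋃ j ∈ T, {ω | P j ω ≤ t / m} := by
    intro ω hω
    obtain ⟨j, hjT, hj⟩ :=
      exists_mem_le_of_monotone_perm (x := fun j => P j ω) (hQmono ω) (hQperm ω) ⟨u - 1, by omega⟩ (T := T) (by simp; omega)
    refine Set.mem_biUnion hjT (hj.trans ?_)
    rw [le_div_iff₀ (by positivity), mul_comm, ← hmr]
    exact hω
  calc _ ≤ #T * ENNReal.ofReal (t / m) := measure_le_card_mul_of_subset_biUnion T hevent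
        fun j hj => hvalid j (hTtrue j hj) _ hs
    _ = ENNReal.ofReal t := by rw [hTcard]; exact natCast_mul_ofReal_div (by omega) t
end

section
/- For real numbers F_1,...,F_m in [0,1] and constants α ∈ [0,1], k ∈ ℕ, define t̂ = sup{ t ∈ [0, kα] : t · Σ_{ℓ=1}^m 1{F_ℓ < t} ≤ kα } and, for a fixed index i, t̂_i = sup{ t ∈ [0,1] : t · (1 + Σ_{ℓ≠i} 1{F_ℓ < t}) ≤ kα }. Then t̂_i ≤ t̂. -/
/-!
Every `t` admissible for the leave-one-out threshold is admissible for the full one: the count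
`∑ ℓ, 1{F ℓ < t}` exceeds the leave-one-out count by at most the single term `1{F i < t} ≤ 1`, and
`t ≤ t * (1 + …) ≤ k α`. So the supremum is taken over a smaller set of nonnegative reals.
-/

open Finset

/-- On `ℝ`, `sSup ∅ = 0`, so monotonicity of `sSup` under inclusion needs no nonemptiness once
the larger set is nonnegative. -/
theorem Real.sSup_le_sSup_of_subset_of_nonneg {A B : Set ℝ} (hB : BddAbove B)
    (hB_nonneg : ∀ x ∈ B, 0 ≤ x) (hAB : A ⊆ B) : sSup A ≤ sSup B := by
  rcases A.eq_empty_or_nonempty with rfl | hA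
  · exact Real.sSup_empty ▸ Real.sSup_nonneg hB_nonneg
  · exact csSup_le_csSup hB hA hAB

theorem sum_le_one_add_sum_erase {ι : Type*} [DecidableEq ι] {s : Finset ι} {i : ι}
    (hi : i ∈ s) (f : ι → ℝ) (hfi : f i ≤ 1) : ∑ ℓ ∈ s, f ℓ ≤ 1 + ∑ ℓ ∈ s.erase i, f ℓ := by
  rw [← add_sum_erase s f hi]
  linarith

theorem leaveOneOut_admissible_subset {m : ℕ} (F : Fin m → ℝ) (c : ℝ) (i : Fin m) :
    {t : ℝ | t ∈ Set.Icc (0:ℝ) 1 ∧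
        t * (1 + ∑ ℓ ∈ univ.erase i, (if F ℓ < t then (1:ℝ) else 0)) ≤ c}
      ⊆ {t : ℝ | t ∈ Set.Icc (0:ℝ) c ∧
        t * (∑ ℓ : Fin m, (if F ℓ < t then (1:ℝ) else 0)) ≤ c} := by
  rintro t ⟨⟨ht0, -⟩, hle⟩
  have hcount_nonneg : (0:ℝ) ≤ ∑ ℓ ∈ univ.erase i, (if F ℓ < t then (1:ℝ) else 0) :=
    sum_nonneg fun ℓ _ => by positivity
  have hcount_le : ∑ ℓ : Fin m, (if F ℓ < t then (1:ℝ) else 0)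
      ≤ 1 + ∑ ℓ ∈ univ.erase i, (if F ℓ < t then (1:ℝ) else 0) :=
    sum_le_one_add_sum_erase (mem_univ i) _ (by split_ifs <;> norm_num)
  refine ⟨⟨ht0, ?_⟩, (mul_le_mul_of_nonneg_left hcount_le ht0).trans hle⟩
  calc t = t * 1 := (mul_one t).symm
    _ ≤ _ := mul_le_mul_of_nonneg_left (by linarith) ht0
    _ ≤ c := hle

theorem stmt_1_general (m : ℕ) (F : Fin m → ℝ) (α : ℝ) (k : ℕ) (i : Fin m) :
    sSup {t : ℝ | t ∈ Set.Icc (0:ℝ) 1 ∧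
        t * (1 + ∑ ℓ ∈ Finset.univ.erase i, (if F ℓ < t then (1:ℝ) else 0)) ≤ k * α}
      ≤ sSup {t : ℝ | t ∈ Set.Icc (0:ℝ) (k * α) ∧
        t * (∑ ℓ : Fin m, (if F ℓ < t then (1:ℝ) else 0)) ≤ k * α} :=
  Real.sSup_le_sSup_of_subset_of_nonneg ⟨k * α, fun _ ht => ht.1.2⟩ (fun _ ht => ht.1.1)
    (leaveOneOut_admissible_subset F (k * α) i)

/-- Leave-one-out AdaFilter threshold is no larger than the full threshold. -/
theorem stmt_1 (m : ℕ) (hm : 1 ≤ m) (F : Fin m → ℝ)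
    (hF : ∀ ℓ, F ℓ ∈ Set.Icc (0:ℝ) 1) (α : ℝ) (hα : α ∈ Set.Icc (0:ℝ) 1)
    (k : ℕ) (hk : 1 ≤ k) (i : Fin m) :
    sSup {t : ℝ | t ∈ Set.Icc (0:ℝ) 1 ∧
        t * (1 + ∑ ℓ ∈ Finset.univ.erase i, (if F ℓ < t then (1:ℝ) else 0)) ≤ k * α}
      ≤ sSup {t : ℝ | t ∈ Set.Icc (0:ℝ) (k * α) ∧
        t * (∑ ℓ : Fin m, (if F ℓ < t then (1:ℝ) else 0)) ≤ k * α} :=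
  stmt_1_general m F α k i
end

section
/- Suppose the p-values (P_{ij}) for i = 1,...,m, j = 1,...,n are mutually independent and valid under their respective true nulls. Let S_i and F_i be the Bonferroni-combined PC p-value and the filtering p-value for feature i, let t̂ = sup{ t ∈ [0, kα] : t · Σ_{ℓ=1}^m 1{F_ℓ < t} ≤ kα }, and let R = { i : S_i < t̂ }. Then the k-FWER of R satisfies Pr( Σ_{i∈R} 1{H_i^{u/n} is true} ≥ k ) ≤ α · E[ π_0(t̂) ], where π_0(t̂) = (Σ_i 1{F_i < t̂}·1{H_i^{u/n} true}) / (Σ_i 1{F_i < t̂}) is the post-filter proportion of true PC nulls (interpreted as 0 when the denominator is 0). -/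
/-!
Write `C(t) = #{ℓ | F_ℓ < t}`. It is a left-continuous step function, so the supremum defining
`t̂` is attained: `t̂ · C(t̂) ≤ kα`. If `S_i < t̂` then `F_i < t̂`, and `t̂` equals the threshold
`τ_i` computed with feature `i` forced through the filter, a function of the other features only.
For a PC null `i`, at least `n - u + 1` of its studies are true nulls, so one of them, `j`, is
among the `u` studies below `t̂ / (n - u + 1)`; then `P_ij` lies below a cutoff built from the
p-values other than `P_ij`. Independence and validity bound the probability of this by
`E[t̂ · 1{F_i < t̂}] / (n - u + 1)`, and the union bound over `n - u + 1` true nulls gives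
`Pr(S_i < t̂) ≤ E[t̂ · 1{F_i < t̂}]`. Summing over PC nulls, the expected number `V` of false
rejections is at most `E[t̂ · #{PC nulls i with F_i < t̂}] ≤ kα · E[π₀(t̂)]`, and Markov's
inequality `k · Pr(V ≥ k) ≤ E[V]` concludes.
-/

open MeasureTheory Finset Filter Topology ProbabilityTheory
open scoped ENNReal

lemma Monotone.lt_iff_le_card_filter_lt {α : Type*} [LinearOrder α] {n : ℕ} {q : Fin n → α}
    (hq : Monotone q) (r : Fin n) (c : α) : q r < c ↔ (r : ℕ) + 1 ≤ #{j | q j < c} := by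
  constructor
  · intro h
    have hsub : Iic r ⊆ ({j | q j < c} : Finset (Fin n)) := fun j hj =>
      mem_filter.mpr ⟨mem_univ j, (hq (mem_Iic.mp hj)).trans_lt h⟩
    simpa using card_le_card hsub
  · intro h
    by_contra! hr
    have hsub : ({j | q j < c} : Finset (Fin n)) ⊆ Iio r := fun j hj =>
      mem_Iio.mpr (lt_of_not_ge fun hrj => (hr.trans (hq hrj)).not_gt (mem_filter.mp hj).2)
    have := card_le_card hsub
    simp only [Fin.card_Iio] at this
    omega

lemma exists_card_eq_of_card_filter_not_lt {ι : Type*} [Fintype ι] {p : ι → Prop}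
    [DecidablePred p] {u : ℕ} (h : #{j | ¬ p j} < u) (hu : u ≤ Fintype.card ι) :
    ∃ T : Finset ι, (∀ j ∈ T, p j) ∧ #T = Fintype.card ι - u + 1 := by
  have hsplit := card_filter_add_card_filter_not (s := univ) fun j => p j
  rw [card_univ] at hsplit
  obtain ⟨T, hT, hcard⟩ := exists_subset_card_eq (s := {j | p j}) (n := Fintype.card ι - u + 1)
    (by omega)
  exact ⟨T, fun j hj => (mem_filter.mp (hT hj)).2, hcard⟩

lemma lt_iff_le_card_filter_lt_of_perm {α : Type*} [LinearOrder α] {n : ℕ} {q p : Fin n → α}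
    (hq : Monotone q) (hqp : ∃ σ : Equiv.Perm (Fin n), ∀ j, q j = p (σ j)) (r : Fin n) (c : α) :
    q r < c ↔ (r : ℕ) + 1 ≤ #{j | p j < c} := by
  obtain ⟨σ, hσ⟩ := hqp
  rw [hq.lt_iff_le_card_filter_lt, card_filter, card_filter,
    ← Equiv.sum_comp σ fun j => if p j < c then 1 else 0]
  simp_rw [hσ]

lemma eventually_nhdsLE_lt_iff (w t : ℝ) : ∀ᶠ s in 𝓝[≤] t, (w < s ↔ w < t) := by
  by_cases h : w < t
  · filter_upwards [nhdsWithin_le_nhds (lt_mem_nhds h)] with s hs using iff_of_true hs h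
  · filter_upwards [self_mem_nhdsWithin] with s hs
    exact iff_of_false (fun hws => h (hws.trans_le hs)) h

lemma measurable_card_filter {α ι : Type*} [MeasurableSpace α] (s : Finset ι)
    {p : ι → α → Prop} [∀ j a, Decidable (p j a)] (hp : ∀ j, MeasurableSet {a | p j a}) :
    Measurable fun a => #{j ∈ s | p j a} := by
  simp_rw [card_filter]
  exact Finset.measurable_sum _ fun j _ => Measurable.ite (hp j) measurable_const measurable_const

namespace ProbabilityTheory

variable {Ω : Type*} [MeasurableSpace Ω] {μ : Measure Ω}

lemma measure_lt_le_lintegral_of_indepFun [IsFiniteMeasure μ] {X Y : Ω → ℝ} (hX : Measurable X)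
    (hY : Measurable Y) (hXY : IndepFun X Y μ) {φ : ℝ → ℝ≥0∞} (hφ : Measurable φ)
    (hXφ : ∀ c, μ {ω | X ω < c} ≤ φ c) :
    μ {ω | X ω < Y ω} ≤ ∫⁻ ω, φ (Y ω) ∂μ := by
  have hmap : μ.map (fun ω => (Y ω, X ω)) = (μ.map Y).prod (μ.map X) :=
    (indepFun_iff_map_prod_eq_prod_map_map hY.aemeasurable hX.aemeasurable).mp hXY.symm
  have hlt : MeasurableSet {p : ℝ × ℝ | p.2 < p.1} := measurableSet_lt measurable_snd measurable_fst
  calc μ {ω | X ω < Y ω} = μ.map (fun ω => (Y ω, X ω)) {p | p.2 < p.1} := by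
        rw [Measure.map_apply (hY.prodMk hX) hlt]; rfl
    _ = ∫⁻ y, μ {ω | X ω < y} ∂(μ.map Y) := by
        rw [hmap, Measure.prod_apply hlt]
        refine lintegral_congr fun y => ?_
        exact Measure.map_apply hX measurableSet_Iio
    _ ≤ ∫⁻ y, φ y ∂(μ.map Y) := lintegral_mono hXφ
    _ = ∫⁻ ω, φ (Y ω) ∂μ := lintegral_map hφ hY

lemma iIndepFun.indepFun_comp_of_eq_off {ι β γ : Type*} [Fintype ι] [DecidableEq ι]
    [MeasurableSpace β] [Inhabited β] [MeasurableSpace γ] {X : ι → Ω → β}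
    (hX : iIndepFun X μ) (hXm : ∀ b, Measurable (X b)) (a : ι) {G : (ι → β) → γ}
    (hG : Measurable G) (hGa : ∀ v w, (∀ b ≠ a, v b = w b) → G v = G w) :
    IndepFun (X a) (fun ω => G fun b => X b ω) μ := by
  let extend : (univ.erase a → β) → ι → β := fun w b =>
    if h : b = a then default else w ⟨b, by simp [h]⟩
  have hextend : Measurable extend := measurable_pi_lambda _ fun b => by
    by_cases h : b = a
    · simp [extend, h]
    · simpa [extend, h] using measurable_pi_apply _
  have hG' : (fun ω => G fun b => X b ω) = (G ∘ extend) ∘ fun ω (b : univ.erase a) => X b ω :=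
    funext fun ω => hGa _ _ fun b hb => by simp [extend, hb]
  rw [hG']
  exact (hX.indepFun_finset {a} (univ.erase a) (by simp) hXm).comp
    (measurable_pi_apply ⟨a, mem_singleton_self a⟩) (hG.comp hextend)

lemma measure_lt_le_ofReal [IsProbabilityMeasure μ] {X : Ω → ℝ}
    (hX : ∀ t ∈ Set.Icc (0 : ℝ) 1, μ {ω | X ω ≤ t} ≤ ENNReal.ofReal t) (c : ℝ) :
    μ {ω | X ω < c} ≤ ENNReal.ofReal c := by
  rcases le_or_gt c 0 with hc0 | hc0
  · refine (measure_mono fun ω (hω : X ω < c) => ?_).trans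
      ((hX 0 ⟨le_rfl, zero_le_one⟩).trans (by simp))
    exact (hω.trans_le hc0).le
  rcases le_or_gt c 1 with hc1 | hc1
  · exact (measure_mono fun ω (hω : X ω < c) => hω.le).trans (hX c ⟨hc0.le, hc1⟩)
  · exact prob_le_one.trans (by simpa using hc1.le)

lemma measure_const_mul_lt_le {X : Ω → ℝ} (hX : ∀ c, μ {ω | X ω < c} ≤ ENNReal.ofReal c)
    {β : ℝ} (hβ : 0 < β) (c : ℝ) :
    μ {ω | β * X ω < c} ≤ ENNReal.ofReal c / ENNReal.ofReal β := by
  simp_rw [← lt_div_iff₀' hβ]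
  exact (hX (c / β)).trans_eq (ENNReal.ofReal_div_of_pos hβ)

lemma natCast_mul_measure_le_sum {ι : Type*} (s : Finset ι) {p : ι → Ω → Prop}
    [∀ i ω, Decidable (p i ω)] (hp : ∀ i ∈ s, MeasurableSet {ω | p i ω}) (k : ℕ) :
    k * μ {ω | k ≤ #{i ∈ s | p i ω}} ≤ ∑ i ∈ s, μ {ω | p i ω} := by
  have hind : ∀ i ∈ s, Measurable ({ω | p i ω}.indicator (1 : Ω → ℝ≥0∞)) := fun i hi =>
    measurable_one.indicator (hp i hi)
  have hcount : ∀ ω, (#{i ∈ s | p i ω} : ℝ≥0∞) = ∑ i ∈ s, {ω | p i ω}.indicator 1 ω := by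
    simp [Set.indicator_apply]
  calc k * μ {ω | k ≤ #{i ∈ s | p i ω}}
      = k * μ {ω | (k : ℝ≥0∞) ≤ ∑ i ∈ s, {ω | p i ω}.indicator 1 ω} := by
        simp_rw [← hcount, Nat.cast_le]
    _ ≤ ∫⁻ ω, ∑ i ∈ s, {ω | p i ω}.indicator 1 ω ∂μ :=
        mul_meas_ge_le_lintegral₀ (Finset.measurable_sum _ hind).aemeasurable _
    _ = ∑ i ∈ s, μ {ω | p i ω} := by
        rw [lintegral_finsetSum _ hind]
        exact sum_congr rfl fun i hi => lintegral_indicator_one (hp i hi)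

end ProbabilityTheory

namespace AdaFilter

section Threshold

noncomputable def threshold (K : ℝ) (C : ℝ → ℝ) : ℝ := sSup {t | t ∈ Set.Icc 0 K ∧ t * C t ≤ K}

variable {K : ℝ} {C C₁ C₂ : ℝ → ℝ}

lemma bddAbove_threshold_set (K : ℝ) (C : ℝ → ℝ) :
    BddAbove {t | t ∈ Set.Icc 0 K ∧ t * C t ≤ K} :=
  ⟨K, fun _ ht => ht.1.2⟩

lemma zero_mem_threshold_set (hK : 0 ≤ K) (C : ℝ → ℝ) :
    (0 : ℝ) ∈ {t | t ∈ Set.Icc 0 K ∧ t * C t ≤ K} :=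
  ⟨⟨le_rfl, hK⟩, by simpa using hK⟩

lemma le_threshold {t : ℝ} (ht : t ∈ Set.Icc 0 K) (h : t * C t ≤ K) : t ≤ threshold K C :=
  le_csSup (bddAbove_threshold_set K C) ⟨ht, h⟩

lemma threshold_nonneg (hK : 0 ≤ K) (C : ℝ → ℝ) : 0 ≤ threshold K C :=
  le_threshold ⟨le_rfl, hK⟩ (by simpa using hK)

lemma threshold_le (hK : 0 ≤ K) (C : ℝ → ℝ) : threshold K C ≤ K :=
  csSup_le ⟨0, zero_mem_threshold_set hK C⟩ fun _ ht => ht.1.2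

lemma threshold_anti (hK : 0 ≤ K) (h : ∀ t, C₁ t ≤ C₂ t) : threshold K C₂ ≤ threshold K C₁ :=
  csSup_le_csSup (bddAbove_threshold_set K C₁) ⟨0, zero_mem_threshold_set hK C₂⟩
    fun t ht => ⟨ht.1, (mul_le_mul_of_nonneg_left (h t) ht.1.1).trans ht.2⟩

lemma threshold_mul_le (hK : 0 ≤ K) (hC : ∀ t, ∀ᶠ s in 𝓝[≤] t, C s = C t) :
    threshold K C * C (threshold K C) ≤ K := by
  set A := {t | t ∈ Set.Icc 0 K ∧ t * C t ≤ K}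
  set τ := threshold K C
  by_contra! hlt
  have hclosure : τ ∈ closure A := csSup_mem_closure ⟨0, zero_mem_threshold_set hK C⟩
    (bddAbove_threshold_set K C)
  have := mem_closure_iff_nhdsWithin_neBot.mp hclosure
  have hle : 𝓝[A] τ ≤ 𝓝[≤] τ := nhdsWithin_mono τ fun t ht => le_threshold ht.1 ht.2
  have hgt : ∀ᶠ s in 𝓝[≤] τ, K < s * C τ :=
    ((continuous_id.mul continuous_const).tendsto τ).mono_left nhdsWithin_le_nhds
      |>.eventually_const_lt hlt
  obtain ⟨s, hsA, hCs, hKs⟩ :=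
    ((eventually_mem_nhdsWithin (s := A) (a := τ)).and (hle ((hC τ).and hgt))).exists
  exact (hCs ▸ hKs).not_ge hsA.2

lemma le_threshold_iff (hK : 0 ≤ K) (hmono : Monotone C) (h0 : ∀ t, 0 ≤ C t)
    (hC : ∀ t, ∀ᶠ s in 𝓝[≤] t, C s = C t) {a : ℝ} (ha : 0 ≤ a) :
    a ≤ threshold K C ↔ a ≤ K ∧ a * C a ≤ K := by
  refine ⟨fun h => ⟨h.trans (threshold_le hK C), ?_⟩, fun h => le_threshold ⟨ha, h.1⟩ h.2⟩
  calc a * C a ≤ threshold K C * C (threshold K C) :=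
        mul_le_mul h (hmono h) (h0 a) (threshold_nonneg hK C)
    _ ≤ K := threshold_mul_le hK hC

lemma measurable_threshold {X : Type*} [MeasurableSpace X] {C : X → ℝ → ℝ} (hK : 0 ≤ K)
    (hmono : ∀ x, Monotone (C x)) (h0 : ∀ x t, 0 ≤ C x t)
    (hC : ∀ x t, ∀ᶠ s in 𝓝[≤] t, C x s = C x t) (hmeas : ∀ t, Measurable fun x => C x t) :
    Measurable fun x => threshold K (C x) := by
  refine measurable_of_Ici fun a => ?_
  rcases le_or_gt a 0 with ha | ha
  · convert MeasurableSet.univ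
    exact Set.eq_univ_of_forall fun x => ha.trans (threshold_nonneg hK (C x))
  · have : (fun x => threshold K (C x)) ⁻¹' Set.Ici a = {_x | a ≤ K} ∩ {x | a * C x a ≤ K} := by
      ext x
      exact le_threshold_iff hK (hmono x) (h0 x) (hC x) ha.le
    rw [this]
    exact (MeasurableSet.const _).inter
      (measurableSet_le ((hmeas a).const_mul a) measurable_const)

end Threshold

section Counting

variable {I J : Type*} [Fintype J]

/-- With `x` the p-values scaled by `n - u + 1` and `r = u - 1`, feature `ℓ` passes the filter
at level `t` (`F_ℓ < t`) iff `r ≤ #{j | x (ℓ, j) < t}`, and is rejected (`S_ℓ < t`) iff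
`r + 1 ≤ #{j | x (ℓ, j) < t}`. -/
noncomputable def passCount (r : ℕ) (x : I × J → ℝ) (s : Finset I) (t : ℝ) : ℝ :=
  ∑ ℓ ∈ s, if r ≤ #{j | x (ℓ, j) < t} then 1 else 0

variable {r : ℕ} {x : I × J → ℝ} {s : Finset I}

lemma passCount_nonneg (t : ℝ) : 0 ≤ passCount r x s t :=
  sum_nonneg fun _ _ => by positivity

lemma monotone_passCount : Monotone (passCount r x s) := by
  intro t t' htt'
  refine sum_le_sum fun ℓ _ => ?_
  have : #{j | x (ℓ, j) < t} ≤ #{j | x (ℓ, j) < t'} :=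
    card_le_card fun j => by simpa using fun h : x (ℓ, j) < t => h.trans_le htt'
  split_ifs <;> first | omega | norm_num

lemma eventually_passCount_eq (t : ℝ) :
    ∀ᶠ t' in 𝓝[≤] t, passCount r x s t' = passCount r x s t := by
  have h : ∀ᶠ t' in 𝓝[≤] t, ∀ ℓ ∈ s, ∀ j, (x (ℓ, j) < t' ↔ x (ℓ, j) < t) :=
    (eventually_all_finset s).mpr fun ℓ _ =>
      eventually_all.mpr fun j => eventually_nhdsLE_lt_iff (x (ℓ, j)) t
  filter_upwards [h] with t' ht'
  refine sum_congr rfl fun ℓ hℓ => ?_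
  rw [filter_congr fun j _ => ht' ℓ hℓ j]

lemma measurable_passCount (r : ℕ) (s : Finset I) (t : ℝ) :
    Measurable fun x : I × J → ℝ => passCount r x s t :=
  Finset.measurable_sum _ fun _ _ => Measurable.ite
    ((measurable_card_filter _ fun _ => measurableSet_lt (measurable_pi_apply _) measurable_const)
      measurableSet_Ici) measurable_const measurable_const

lemma passCount_univ_le [Fintype I] [DecidableEq I] (i : I) (t : ℝ) :
    passCount r x univ t ≤ 1 + passCount r x (univ.erase i) t := by
  simp only [passCount, ← add_sum_erase _ _ (mem_univ i)]
  gcongr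
  split_ifs <;> norm_num

lemma passCount_univ_eq [Fintype I] [DecidableEq I] {i : I} {t : ℝ} (h : r ≤ #{j | x (i, j) < t}) :
    passCount r x univ t = 1 + passCount r x (univ.erase i) t := by
  simp only [passCount, ← add_sum_erase _ _ (mem_univ i), if_pos h]

end Counting

section Screening

variable {I J : Type*} [Fintype I] [Fintype J] {K : ℝ} {r : ℕ} {x : I × J → ℝ}

noncomputable def fullThreshold (K : ℝ) (r : ℕ) (x : I × J → ℝ) : ℝ :=
  threshold K (passCount r x univ)

lemma fullThreshold_mul_passCount_le (hK : 0 ≤ K) :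
    fullThreshold K r x * passCount r x univ (fullThreshold K r x) ≤ K :=
  threshold_mul_le hK eventually_passCount_eq

lemma measurable_fullThreshold (hK : 0 ≤ K) (r : ℕ) :
    Measurable fun x : I × J → ℝ => fullThreshold K r x :=
  measurable_threshold hK (fun _ => monotone_passCount) (fun _ => passCount_nonneg)
    (fun _ => eventually_passCount_eq) (measurable_passCount r univ)

/-- The fraction `π₀(t)` of true PC nulls among the features passing the filter at level `t`
(`0 / 0 = 0`). -/
noncomputable def nullFraction (r : ℕ) (null : I → Prop) [DecidablePred null]
    (x : I × J → ℝ) (t : ℝ) : ℝ :=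
  (∑ i, if r ≤ #{j | x (i, j) < t} ∧ null i then 1 else 0) / passCount r x univ t

section NullFraction

variable {null : I → Prop} [DecidablePred null]

lemma sum_ite_null_le_passCount (t : ℝ) :
    ∑ i, (if r ≤ #{j | x (i, j) < t} ∧ null i then (1 : ℝ) else 0) ≤ passCount r x univ t :=
  sum_le_sum fun i _ => by split_ifs with h h' <;> first | exact absurd h.1 h' | norm_num

lemma nullFraction_nonneg (t : ℝ) : 0 ≤ nullFraction r null x t :=
  div_nonneg (sum_nonneg fun _ _ => by positivity) (passCount_nonneg t)

lemma nullFraction_le_one (t : ℝ) : nullFraction r null x t ≤ 1 :=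
  div_le_one_of_le₀ (sum_ite_null_le_passCount t) (passCount_nonneg t)

lemma measurable_nullFraction (hK : 0 ≤ K) (r : ℕ) (null : I → Prop) [DecidablePred null] :
    Measurable fun x : I × J → ℝ => nullFraction r null x (fullThreshold K r x) := by
  have hpass : ∀ i, MeasurableSet {x : I × J → ℝ | r ≤ #{j | x (i, j) < fullThreshold K r x}} :=
    fun i => (measurable_card_filter _ fun _ => measurableSet_lt (measurable_pi_apply _)
      (measurable_fullThreshold hK r)) measurableSet_Ici
  refine Measurable.div ?_ ?_
  · exact Finset.measurable_sum _ fun i _ =>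
      Measurable.ite ((hpass i).inter (MeasurableSet.const _)) measurable_const measurable_const
  · exact Finset.measurable_sum _ fun i _ =>
      Measurable.ite (hpass i) measurable_const measurable_const

lemma sum_ite_fullThreshold_le (hK : 0 ≤ K) :
    ∑ i, (if r ≤ #{j | x (i, j) < fullThreshold K r x} ∧ null i then fullThreshold K r x else 0)
      ≤ K * nullFraction r null x (fullThreshold K r x) := by
  set t := fullThreshold K r x
  set a := ∑ i, (if r ≤ #{j | x (i, j) < t} ∧ null i then (1 : ℝ) else 0)
  have ha : 0 ≤ a := sum_nonneg fun _ _ => by positivity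
  have hab : a ≤ passCount r x univ t := sum_ite_null_le_passCount t
  have hsum : ∑ i, (if r ≤ #{j | x (i, j) < t} ∧ null i then t else 0) = t * a := by
    simp_rw [a, mul_sum, mul_ite, mul_one, mul_zero]
  rw [hsum, nullFraction]
  rcases (passCount_nonneg (r := r) (x := x) (s := univ) t).eq_or_lt with h0 | hpos
  · rw [← h0, div_zero, mul_zero, le_antisymm (h0 ▸ hab) ha, mul_zero]
  · calc t * a = t * passCount r x univ t * (a / passCount r x univ t) := by field_simp
      _ ≤ K * (a / passCount r x univ t) :=
        mul_le_mul_of_nonneg_right (fullThreshold_mul_passCount_le hK) (by positivity)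

end NullFraction

variable [DecidableEq I] {i : I}

/-- `fullThreshold` recomputed with feature `i` forced through the filter. -/
noncomputable def looThreshold (K : ℝ) (r : ℕ) (x : I × J → ℝ) (i : I) : ℝ :=
  threshold K fun t => 1 + passCount r x (univ.erase i) t

lemma looThreshold_le_fullThreshold (hK : 0 ≤ K) : looThreshold K r x i ≤ fullThreshold K r x :=
  threshold_anti hK (passCount_univ_le i)

lemma fullThreshold_eq_looThreshold (hK : 0 ≤ K)
    (h : r ≤ #{j | x (i, j) < fullThreshold K r x}) :
    fullThreshold K r x = looThreshold K r x i := by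
  refine le_antisymm ?_ (looThreshold_le_fullThreshold hK)
  refine le_threshold ⟨threshold_nonneg hK _, threshold_le hK _⟩ ?_
  rw [← passCount_univ_eq h]
  exact fullThreshold_mul_passCount_le hK

lemma looThreshold_congr {y : I × J → ℝ} (h : ∀ ℓ ≠ i, ∀ j, x (ℓ, j) = y (ℓ, j)) :
    looThreshold K r x i = looThreshold K r y i := by
  unfold looThreshold passCount
  congr! 6 with t ℓ hℓ
  exact congrArg card (filter_congr fun j _ => by rw [h ℓ (ne_of_mem_erase hℓ) j])

lemma measurable_looThreshold (hK : 0 ≤ K) (r : ℕ) (i : I) :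
    Measurable fun x : I × J → ℝ => looThreshold K r x i :=
  measurable_threshold hK (fun _ => monotone_passCount.const_add 1)
    (fun _ t => add_nonneg zero_le_one (passCount_nonneg t))
    (fun _ t => (eventually_passCount_eq t).mono fun _ h => by rw [h])
    (fun t => (measurable_passCount r _ t).const_add 1)

variable [DecidableEq J] {j : J}

noncomputable def looCutoff (K : ℝ) (r : ℕ) (x : I × J → ℝ) (i : I) (j : J) : ℝ :=
  if r ≤ #{j' | j' ≠ j ∧ x (i, j') < looThreshold K r x i} then looThreshold K r x i else 0

lemma looCutoff_congr {y : I × J → ℝ} (h : ∀ p ≠ (i, j), x p = y p) :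
    looCutoff K r x i j = looCutoff K r y i j := by
  have hloo : looThreshold K r x i = looThreshold K r y i :=
    looThreshold_congr fun ℓ hℓ j' => h _ (by simp [hℓ])
  unfold looCutoff
  rw [hloo, filter_congr fun j' _ => and_congr_right fun hj' => by rw [h _ (by simp [hj'])]]

lemma measurable_looCutoff (hK : 0 ≤ K) (r : ℕ) (i : I) (j : J) :
    Measurable fun x : I × J → ℝ => looCutoff K r x i j := by
  have hloo := measurable_looThreshold (J := J) hK r i
  refine Measurable.ite ?_ hloo measurable_const
  exact (measurable_card_filter (p := fun j' x => j' ≠ j ∧ x (i, j') < looThreshold K r x i) _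
    fun j' =>
    (MeasurableSet.const _).inter (measurableSet_lt (measurable_pi_apply _) hloo))
    measurableSet_Ici

lemma lt_looCutoff (hK : 0 ≤ K) (hj : x (i, j) < fullThreshold K r x)
    (h : r + 1 ≤ #{j' | x (i, j') < fullThreshold K r x}) : x (i, j) < looCutoff K r x i j := by
  have hfull := fullThreshold_eq_looThreshold (r := r) (x := x) (i := i) hK (by omega)
  have hcard : #{j' | j' ≠ j ∧ x (i, j') < looThreshold K r x i}
      = #{j' | x (i, j') < fullThreshold K r x} - 1 := by
    rw [← card_erase_of_mem (by simpa using hj), ← filter_erase, hfull]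
    congr 1
    ext j'
    simp [and_comm]
  rw [looCutoff, if_pos (by omega), ← hfull]
  exact hj

lemma looCutoff_le (hK : 0 ≤ K) :
    looCutoff K r x i j ≤
      if r ≤ #{j' | x (i, j') < fullThreshold K r x} then fullThreshold K r x else 0 := by
  have hle := looThreshold_le_fullThreshold (r := r) (x := x) (i := i) hK
  unfold looCutoff
  split_ifs with hloo hfull
  · exact hle
  · refine absurd (hloo.trans (card_le_card fun j' => ?_)) hfull
    simp only [mem_filter, mem_univ, true_and]
    exact fun h => h.2.trans_le hle
  · exact threshold_nonneg hK _
  · exact le_rfl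

end Screening

section Rejections

variable {Ω : Type*} [MeasurableSpace Ω] {μ : Measure Ω} [IsProbabilityMeasure μ]
  {I J : Type*} [Fintype I] [Fintype J] {X : I × J → Ω → ℝ} {K : ℝ} {r : ℕ}

lemma lintegral_ofReal_mul_nullFraction (hXm : ∀ p, Measurable (X p)) (hK : 0 ≤ K)
    (null : I → Prop) [DecidablePred null] :
    ∫⁻ ω, ENNReal.ofReal
        (K * nullFraction r null (fun p => X p ω) (fullThreshold K r fun p => X p ω)) ∂μ =
      ENNReal.ofReal
        (K * ∫ ω, nullFraction r null (fun p => X p ω) (fullThreshold K r fun p => X p ω) ∂μ) := by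
  have hπ : Integrable (fun ω => nullFraction r null (fun p => X p ω)
      (fullThreshold K r fun p => X p ω)) μ :=
    .of_bound ((measurable_nullFraction hK r null).comp
      (measurable_pi_lambda _ hXm)).aestronglyMeasurable 1 (ae_of_all _ fun ω => by
        rw [Real.norm_of_nonneg (nullFraction_nonneg _)]; exact nullFraction_le_one _)
  rw [← integral_const_mul, ofReal_integral_eq_lintegral_ofReal (hπ.const_mul K)
    (ae_of_all _ fun ω => mul_nonneg hK (nullFraction_nonneg _))]

variable [DecidableEq I] [DecidableEq J]

/-- Among the `r + 1` studies of a rejected feature one is in `T` by pigeonhole, and its p-value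
then lies below the leave-one-out cutoff, which is independent of it. -/
theorem measure_le_lintegral_fullThreshold (hXm : ∀ p, Measurable (X p)) (hX : iIndepFun X μ)
    (hK : 0 ≤ K) (i : I) (T : Finset J) (hT : Fintype.card J ≤ r + #T)
    (hval : ∀ j ∈ T, ∀ c, μ {ω | X (i, j) ω < c} ≤ ENNReal.ofReal c / #T) :
    μ {ω | r + 1 ≤ #{j | X (i, j) ω < fullThreshold K r (fun p => X p ω)}} ≤
      ∫⁻ ω, ENNReal.ofReal (if r ≤ #{j | X (i, j) ω < fullThreshold K r (fun p => X p ω)}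
        then fullThreshold K r (fun p => X p ω) else 0) ∂μ := by
  set x : Ω → I × J → ℝ := fun ω p => X p ω
  set bound : Ω → ℝ≥0∞ := fun ω => ENNReal.ofReal
    (if r ≤ #{j | x ω (i, j) < fullThreshold K r (x ω)} then fullThreshold K r (x ω) else 0)
  have hx : Measurable x := measurable_pi_lambda _ hXm
  have hcover : {ω | r + 1 ≤ #{j | x ω (i, j) < fullThreshold K r (x ω)}} ⊆
      ⋃ j ∈ T, {ω | X (i, j) ω < looCutoff K r (x ω) i j} := by
    intro ω (hω : r + 1 ≤ _)
    obtain ⟨j, hj⟩ := inter_nonempty_of_card_lt_card_add_card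
      (subset_univ {j | x ω (i, j) < fullThreshold K r (x ω)}) (subset_univ T)
      (by rw [card_univ]; omega)
    obtain ⟨hjA, hjT⟩ := mem_inter.mp hj
    exact Set.mem_biUnion hjT (lt_looCutoff hK (mem_filter.mp hjA).2 hω)
  have hstudy : ∀ j ∈ T, μ {ω | X (i, j) ω < looCutoff K r (x ω) i j} ≤
      ∫⁻ ω, bound ω / #T ∂μ := fun j hj =>
    (measure_lt_le_lintegral_of_indepFun (hXm _) ((measurable_looCutoff hK r i j).comp hx)
      (hX.indepFun_comp_of_eq_off hXm (i, j) (measurable_looCutoff hK r i j)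
        fun _ _ h => looCutoff_congr h)
      (ENNReal.measurable_ofReal.div_const _) (hval j hj)).trans
    (lintegral_mono fun ω => ENNReal.div_le_div_right
      (ENNReal.ofReal_le_ofReal (looCutoff_le hK)) _)
  calc μ {ω | r + 1 ≤ #{j | x ω (i, j) < fullThreshold K r (x ω)}}
      ≤ μ (⋃ j ∈ T, {ω | X (i, j) ω < looCutoff K r (x ω) i j}) := measure_mono hcover
    _ ≤ ∑ j ∈ T, μ {ω | X (i, j) ω < looCutoff K r (x ω) i j} := measure_biUnion_finset_le _ _
    _ ≤ ∑ _j ∈ T, ∫⁻ ω, bound ω / #T ∂μ := sum_le_sum hstudy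
    _ = ∫⁻ ω, #T * (bound ω / #T) ∂μ := by
        rw [sum_const, nsmul_eq_mul, lintegral_const_mul' _ _ (ENNReal.natCast_ne_top _)]
    _ ≤ ∫⁻ ω, bound ω ∂μ := lintegral_mono fun ω => ENNReal.mul_div_le

theorem kFWER_le_integral_nullFraction (hXm : ∀ p, Measurable (X p)) (hX : iIndepFun X μ)
    {k : ℕ} (hk : k ≠ 0) {α : ℝ} (hα : 0 ≤ α) (r : ℕ) (null : I → Prop) [DecidablePred null]
    (hnull : ∀ i, null i → ∃ T : Finset J, Fintype.card J ≤ r + #T ∧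
      ∀ j ∈ T, ∀ c, μ {ω | X (i, j) ω < c} ≤ ENNReal.ofReal c / #T) :
    μ {ω | (k : ℝ) ≤ ∑ i, if r + 1 ≤ #{j | X (i, j) ω < fullThreshold (k * α) r (fun p => X p ω)}
        ∧ null i then 1 else 0} ≤
      ENNReal.ofReal (α * ∫ ω, nullFraction r null (fun p => X p ω)
        (fullThreshold (k * α) r (fun p => X p ω)) ∂μ) := by
  set K := (k : ℝ) * α
  have hK : 0 ≤ K := by positivity
  set x : Ω → I × J → ℝ := fun ω p => X p ω
  have hx : Measurable x := measurable_pi_lambda _ hXm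
  set τ := fun ω => fullThreshold K r (x ω)
  have hτ : Measurable τ := (measurable_fullThreshold hK r).comp hx
  have hpass : ∀ i s, MeasurableSet {ω | s ≤ #{j | X (i, j) ω < τ ω} ∧ null i} := fun i s =>
    ((measurable_card_filter _ fun _ => measurableSet_lt (hXm _) hτ) measurableSet_Ici).inter
      (MeasurableSet.const _)
  have hfeature : ∀ i, μ {ω | r + 1 ≤ #{j | X (i, j) ω < τ ω} ∧ null i} ≤
      ∫⁻ ω, ENNReal.ofReal (if r ≤ #{j | X (i, j) ω < τ ω} ∧ null i then τ ω else 0) ∂μ := by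
    intro i
    by_cases hi : null i
    · obtain ⟨T, hT, hval⟩ := hnull i hi
      simpa [hi] using measure_le_lintegral_fullThreshold hXm hX hK i T hT hval
    · simp [hi]
  refine (ENNReal.mul_le_mul_iff_right (a := k) (by simpa) (ENNReal.natCast_ne_top k)).mp ?_
  calc (k : ℝ≥0∞) * μ {ω | (k : ℝ) ≤ ∑ i, if r + 1 ≤ #{j | X (i, j) ω < τ ω} ∧ null i then 1 else 0}
      = k * μ {ω | k ≤ #{i | r + 1 ≤ #{j | X (i, j) ω < τ ω} ∧ null i}} := by
        simp_rw [sum_boole, Nat.cast_le]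
    _ ≤ ∑ i, μ {ω | r + 1 ≤ #{j | X (i, j) ω < τ ω} ∧ null i} :=
        natCast_mul_measure_le_sum _ (fun i _ => hpass i _) k
    _ ≤ ∑ i, ∫⁻ ω, ENNReal.ofReal (if r ≤ #{j | X (i, j) ω < τ ω} ∧ null i then τ ω else 0) ∂μ :=
        sum_le_sum fun i _ => hfeature i
    _ = ∫⁻ ω, ENNReal.ofReal
          (∑ i, if r ≤ #{j | X (i, j) ω < τ ω} ∧ null i then τ ω else 0) ∂μ := by
        rw [← lintegral_finsetSum _ fun i _ =>
          (Measurable.ite (hpass i r) hτ measurable_const).ennreal_ofReal]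
        refine lintegral_congr fun ω => (ENNReal.ofReal_sum_of_nonneg fun i _ => ?_).symm
        split_ifs
        exacts [threshold_nonneg hK _, le_rfl]
    _ ≤ ∫⁻ ω, ENNReal.ofReal (K * nullFraction r null (x ω) (τ ω)) ∂μ :=
        lintegral_mono fun ω => ENNReal.ofReal_le_ofReal (sum_ite_fullThreshold_le (x := x ω) hK)
    _ = k * ENNReal.ofReal (α * ∫ ω, nullFraction r null (x ω) (τ ω) ∂μ) := by
        rw [lintegral_ofReal_mul_nullFraction hXm hK, mul_assoc,
          ENNReal.ofReal_mul (Nat.cast_nonneg k), ENNReal.ofReal_natCast]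

end Rejections

end AdaFilter

open AdaFilter

/-- AdaFilter-Bon `k`-FWER control: with independent valid p-values, the
`k`-FWER of `R = {i : S_i < t̂}` is at most `α · E[π₀(t̂)]`, where `π₀(t̂)` is the
post-filter proportion of true PC nulls. `Q i` denotes the order statistics of
the feature-`i` p-values `P i`. -/
theorem stmt_7 {Ω : Type*} [MeasurableSpace Ω] (μ : Measure Ω)
    [IsProbabilityMeasure μ] (m n : ℕ)
    (u : ℕ) (hu2 : 2 ≤ u) (hun : u ≤ n)
    (k : ℕ) (hk : 1 ≤ k) (α : ℝ) (hα : α ∈ Set.Icc (0:ℝ) 1)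
    (P : Fin m → Fin n → Ω → ℝ) (hPm : ∀ i j, Measurable (P i j))
    (trueH : Fin m → Fin n → Prop) [∀ i, DecidablePred (trueH i)]
    (hvalid : ∀ i j, trueH i j → ∀ t ∈ Set.Icc (0:ℝ) 1,
      μ {ω | P i j ω ≤ t} ≤ ENNReal.ofReal t)
    (hindep : ProbabilityTheory.iIndepFun
      (fun (p : Fin m × Fin n) ω => P p.1 p.2 ω) μ)
    (Q : Fin m → Fin n → Ω → ℝ)
    (hQmono : ∀ i ω, Monotone (fun j => Q i j ω))
    (hQperm : ∀ i ω, ∃ σ : Equiv.Perm (Fin n), ∀ j, Q i j ω = P i (σ j) ω)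
    (S F : Fin m → Ω → ℝ)
    (hSdef : ∀ i ω, S i ω = ((n : ℝ) - u + 1) * Q i ⟨u - 1, by omega⟩ ω)
    (hFdef : ∀ i ω, F i ω = ((n : ℝ) - u + 1) * Q i ⟨u - 2, by omega⟩ ω)
    (that : Ω → ℝ)
    (hthat : ∀ ω, that ω = sSup {t : ℝ | t ∈ Set.Icc (0:ℝ) (k * α) ∧
        t * (∑ ℓ : Fin m, (if F ℓ ω < t then (1:ℝ) else 0)) ≤ k * α})
    (PCtrue : Fin m → Prop) [DecidablePred PCtrue]
    (hPC : ∀ i, PCtrue i ↔ (Finset.univ.filter (fun j => ¬ trueH i j)).card < u)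
    (π₀ : Ω → ℝ)
    (hπ₀ : ∀ ω, π₀ ω =
        (∑ i : Fin m, (if F i ω < that ω ∧ PCtrue i then (1:ℝ) else 0)) /
          (∑ i : Fin m, (if F i ω < that ω then (1:ℝ) else 0))) :
    μ {ω | (k : ℝ) ≤ ∑ i : Fin m,
        (if S i ω < that ω ∧ PCtrue i then (1:ℝ) else 0)} ≤
      ENNReal.ofReal (α * ∫ ω, π₀ ω ∂μ) := by
  set β : ℝ := (n : ℝ) - u + 1
  have hβ : ((n - u + 1 : ℕ) : ℝ) = β := by rw [Nat.cast_add, Nat.cast_sub hun, Nat.cast_one]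
  have hβpos : 0 < β := hβ ▸ Nat.cast_pos.mpr (Nat.succ_pos _)
  set X : Fin m × Fin n → Ω → ℝ := fun p ω => β * P p.1 p.2 ω
  have hstat : ∀ i ω (r : Fin n) t, β * Q i r ω < t ↔ (r : ℕ) + 1 ≤ #{j | X (i, j) ω < t} :=
    fun i ω => lt_iff_le_card_filter_lt_of_perm ((hQmono i ω).const_mul hβpos.le)
      ((hQperm i ω).imp fun _ hσ j => by rw [hσ])
  have hS : ∀ i ω t, S i ω < t ↔ u - 1 + 1 ≤ #{j | X (i, j) ω < t} := fun i ω t => by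
    rw [hSdef, hstat]
  have hF : ∀ i ω t, F i ω < t ↔ u - 1 ≤ #{j | X (i, j) ω < t} := fun i ω t => by
    rw [hFdef, hstat, show u - 2 + 1 = u - 1 by omega]
  have hthat' : ∀ ω, that ω = fullThreshold (k * α) (u - 1) (fun p => X p ω) := fun ω => by
    simp only [hthat, hF]
    rfl
  have hπ₀' : ∀ ω, π₀ ω = nullFraction (u - 1) PCtrue (fun p => X p ω)
      (fullThreshold (k * α) (u - 1) (fun p => X p ω)) := fun ω => by
    simp only [hπ₀, hthat', hF]
    rfl
  have hnull : ∀ i, PCtrue i → ∃ T : Finset (Fin n), Fintype.card (Fin n) ≤ u - 1 + #T ∧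
      ∀ j ∈ T, ∀ c, μ {ω | X (i, j) ω < c} ≤ ENNReal.ofReal c / #T := fun i hi => by
    obtain ⟨T, hT, hcard⟩ := exists_card_eq_of_card_filter_not_lt ((hPC i).mp hi)
      (hun.trans_eq (Fintype.card_fin n).symm)
    rw [Fintype.card_fin] at hcard ⊢
    refine ⟨T, by omega, fun j hj c => ?_⟩
    rw [hcard, ← ENNReal.ofReal_natCast, hβ]
    exact measure_const_mul_lt_le (measure_lt_le_ofReal (hvalid i j (hT j hj))) hβpos c
  simp only [hS, hthat', hπ₀']
  exact kFWER_le_integral_nullFraction (fun p => (hPm _ _).const_mul β)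
    (hindep.comp _ fun _ => measurable_const_mul β) (by omega) hα.1 (u - 1) PCtrue hnull
end

section
/- Let S_1,...,S_m, F_1,...,F_m ∈ [0,1] with F_i ≤ S_i for all i, and τ̂ = sup{ τ ∈ [0,1] : (Σ_i 1{t̂_θ ≤ S_i ≤ τ} + k) / max(1, Σ_i 1{S_i ≤ τ}) ≤ γ } for a fixed threshold t̂_θ ∈ [0,1], k ∈ ℕ, γ ∈ (0,1). Suppose τ̂ is attained, i.e., the defining inequality holds at τ = τ̂. Then the event { (Σ_i 1{S_i ≤ τ̂}·1{H_i true}) / max(1, Σ_i 1{S_i ≤ τ̂}) ≥ γ } is contained in the event { Σ_i 1{S_i < t̂_θ}·1{H_i true} ≥ k }, so the FDX of the rejection set R = {i : S_i ≤ τ̂} at level γ is at most the k-FWER of the set {i : S_i < t̂_θ}. -/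
open MeasureTheory Finset

/- A true null rejected at `τ̂` either lies in `[t̂_θ, τ̂]`, where the attained bound leaves room
for at most `γ·max(1, |R|) - k` features, or lies below `t̂_θ`. So an FDP of at least `γ` forces
at least `k` true nulls below `t̂_θ`. -/

section Augmentation

variable {ι : Type*} [Fintype ι] (s : ι → ℝ) (t τ : ℝ) (p : ι → Prop) [DecidablePred p]

theorem sum_ite_le_and_le_sum_ite_Icc_add_sum_ite_lt :
    ∑ i, (if s i ≤ τ ∧ p i then (1:ℝ) else 0) ≤
      ∑ i, (if t ≤ s i ∧ s i ≤ τ then (1:ℝ) else 0) +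
        ∑ i, (if s i < t ∧ p i then (1:ℝ) else 0) := by
  rw [← sum_add_distrib]
  refine sum_le_sum fun i _ => ?_
  split_ifs <;> grind

theorem le_sum_ite_lt_of_le_fdp {c γ : ℝ}
    (hattained : ((∑ i, (if t ≤ s i ∧ s i ≤ τ then (1:ℝ) else 0)) + c) /
      max 1 (∑ i, (if s i ≤ τ then (1:ℝ) else 0)) ≤ γ)
    (hfdp : γ ≤ (∑ i, (if s i ≤ τ ∧ p i then (1:ℝ) else 0)) /
      max 1 (∑ i, (if s i ≤ τ then (1:ℝ) else 0))) :
    c ≤ ∑ i, (if s i < t ∧ p i then (1:ℝ) else 0) := by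
  have hD : (0:ℝ) < max 1 (∑ i, (if s i ≤ τ then (1:ℝ) else 0)) :=
    zero_lt_one.trans_le (le_max_left _ _)
  have hroom := (div_le_iff₀ hD).mp hattained
  have hnulls := (le_div_iff₀ hD).mp hfdp
  linarith [sum_ite_le_and_le_sum_ite_Icc_add_sum_ite_lt s t τ p]

end Augmentation

theorem stmt_9_general {Ω : Type*} [MeasurableSpace Ω] (μ : Measure Ω)
    (m : ℕ)
    (S : Fin m → Ω → ℝ)
    (trueH : Fin m → Prop) [DecidablePred trueH]
    (tθ : Ω → ℝ)
    (k : ℕ)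
    (γ : ℝ)
    (τ : Ω → ℝ)
    (hattained : ∀ ω,
        ((∑ i : Fin m, (if tθ ω ≤ S i ω ∧ S i ω ≤ τ ω then (1:ℝ) else 0)) + k) /
          max 1 (∑ i : Fin m, (if S i ω ≤ τ ω then (1:ℝ) else 0)) ≤ γ) :
    {ω | γ ≤ (∑ i : Fin m, (if S i ω ≤ τ ω ∧ trueH i then (1:ℝ) else 0)) /
          max 1 (∑ i : Fin m, (if S i ω ≤ τ ω then (1:ℝ) else 0))} ⊆
      {ω | (k : ℝ) ≤ ∑ i : Fin m, (if S i ω < tθ ω ∧ trueH i then (1:ℝ) else 0)} ∧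
    μ {ω | γ ≤ (∑ i : Fin m, (if S i ω ≤ τ ω ∧ trueH i then (1:ℝ) else 0)) /
          max 1 (∑ i : Fin m, (if S i ω ≤ τ ω then (1:ℝ) else 0))} ≤
      μ {ω | (k : ℝ) ≤ ∑ i : Fin m, (if S i ω < tθ ω ∧ trueH i then (1:ℝ) else 0)} := by
  refine ⟨?inclusion, measure_mono ?inclusion⟩
  exact fun ω hfdp => le_sum_ite_lt_of_le_fdp (S · ω) (tθ ω) (τ ω) trueH (hattained ω) hfdp

/-- Augmentation step: the FDX event of the augmented rejection set
`{i : S_i ≤ τ̂}` is contained in the `k`-FWER event of `{i : S_i < t̂_θ}`,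
hence FDX ≤ k-FWER. -/
theorem stmt_9 {Ω : Type*} [MeasurableSpace Ω] (μ : Measure Ω)
    [IsProbabilityMeasure μ] (m : ℕ) (hm : 1 ≤ m)
    (S F : Fin m → Ω → ℝ)
    (hS : ∀ i ω, S i ω ∈ Set.Icc (0:ℝ) 1) (hF : ∀ i ω, F i ω ∈ Set.Icc (0:ℝ) 1)
    (hFS : ∀ i ω, F i ω ≤ S i ω)
    (trueH : Fin m → Prop) [DecidablePred trueH]
    (tθ : Ω → ℝ) (htθ : ∀ ω, tθ ω ∈ Set.Icc (0:ℝ) 1)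
    (k : ℕ) (hk : 1 ≤ k) (γ : ℝ) (hγ : γ ∈ Set.Ioo (0:ℝ) 1)
    (τ : Ω → ℝ)
    (hτ : ∀ ω, τ ω = sSup {x : ℝ | x ∈ Set.Icc (0:ℝ) 1 ∧
        ((∑ i : Fin m, (if tθ ω ≤ S i ω ∧ S i ω ≤ x then (1:ℝ) else 0)) + k) /
          max 1 (∑ i : Fin m, (if S i ω ≤ x then (1:ℝ) else 0)) ≤ γ})
    (hattained : ∀ ω,
        ((∑ i : Fin m, (if tθ ω ≤ S i ω ∧ S i ω ≤ τ ω then (1:ℝ) else 0)) + k) /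
          max 1 (∑ i : Fin m, (if S i ω ≤ τ ω then (1:ℝ) else 0)) ≤ γ) :
    {ω | γ ≤ (∑ i : Fin m, (if S i ω ≤ τ ω ∧ trueH i then (1:ℝ) else 0)) /
          max 1 (∑ i : Fin m, (if S i ω ≤ τ ω then (1:ℝ) else 0))} ⊆
      {ω | (k : ℝ) ≤ ∑ i : Fin m, (if S i ω < tθ ω ∧ trueH i then (1:ℝ) else 0)} ∧
    μ {ω | γ ≤ (∑ i : Fin m, (if S i ω ≤ τ ω ∧ trueH i then (1:ℝ) else 0)) /
          max 1 (∑ i : Fin m, (if S i ω ≤ τ ω then (1:ℝ) else 0))} ≤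
      μ {ω | (k : ℝ) ≤ ∑ i : Fin m, (if S i ω < tθ ω ∧ trueH i then (1:ℝ) else 0)} :=
  stmt_9_general μ m S trueH tθ k γ τ hattained
end

section
/- Let θ ∈ (0,1), t ∈ (0,1], π_0, π_1 ≥ 0 with π_0 + π_1 > 0, and let F̃_0, F̃_1, S̃_0, S̃_1 : (0,1] → [0,∞) satisfy: S̃_1(θt) ≤ F̃_1(t), and S̃_0(θt) ≤ θt·F̃_0(t). Define F̃(t) = π_0 F̃_0(t) + π_1 F̃_1(t) and S̃(θt) = π_0 S̃_0(θt) + π_1 S̃_1(θt), and assume F̃(t) > 0. Then (F̃(t) − S̃(θt)) / ((1 − θt)·F̃(t)) ≥ π_0 F̃_0(t) / F̃(t). -/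
/-! The denominator `(1 - θt) F̃(t)` is positive, so after clearing it the claim reads
`π₀ S̃₀(θt) + π₁ S̃₁(θt) ≤ θt · π₀ F̃₀(t) + π₁ F̃₁(t)`, which is the sum of the two
hypotheses on `S̃₀` and `S̃₁`, weighted by `π₀` and `π₁`. -/

lemma div_le_sub_div_of_le_sub_mul {a f s c : ℝ} (hf : 0 < f) (hc : c < 1)
    (hs : s ≤ f - (1 - c) * a) : a / f ≤ (f - s) / ((1 - c) * f) := by
  have hc' : 0 < 1 - c := sub_pos.mpr hc
  calc a / f = (1 - c) * a / ((1 - c) * f) := (mul_div_mul_left a f hc'.ne').symm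
    _ ≤ (f - s) / ((1 - c) * f) := by gcongr; linarith

lemma mul_lt_one_of_mem_Ioo_of_mem_Ioc {θ t : ℝ} (hθ : θ ∈ Set.Ioo (0 : ℝ) 1)
    (ht : t ∈ Set.Ioc (0 : ℝ) 1) : θ * t < 1 :=
  calc θ * t ≤ θ := mul_le_of_le_one_right hθ.1.le ht.2
    _ < 1 := hθ.2

theorem stmt_13_general (θ t π₀ π₁ : ℝ) (F₀ F₁ S₀ S₁ : ℝ → ℝ)
    (hθ : θ ∈ Set.Ioo (0:ℝ) 1) (ht : t ∈ Set.Ioc (0:ℝ) 1)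
    (hπ₀ : 0 ≤ π₀) (hπ₁ : 0 ≤ π₁)
    (h1 : S₁ (θ * t) ≤ F₁ t) (h0 : S₀ (θ * t) ≤ θ * t * F₀ t)
    (hFpos : 0 < π₀ * F₀ t + π₁ * F₁ t) :
    π₀ * F₀ t / (π₀ * F₀ t + π₁ * F₁ t) ≤
      ((π₀ * F₀ t + π₁ * F₁ t) - (π₀ * S₀ (θ * t) + π₁ * S₁ (θ * t))) /
        ((1 - θ * t) * (π₀ * F₀ t + π₁ * F₁ t)) := by
  apply div_le_sub_div_of_le_sub_mul hFpos (mul_lt_one_of_mem_Ioo_of_mem_Ioc hθ ht)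
  have hnull := mul_le_mul_of_nonneg_left h0 hπ₀
  have halt := mul_le_mul_of_nonneg_left h1 hπ₁
  linarith

/-- Deterministic inequality underlying the consistency of the post-filter
null proportion estimator. -/
theorem stmt_13 (θ t π₀ π₁ : ℝ) (F₀ F₁ S₀ S₁ : ℝ → ℝ)
    (hθ : θ ∈ Set.Ioo (0:ℝ) 1) (ht : t ∈ Set.Ioc (0:ℝ) 1)
    (hπ₀ : 0 ≤ π₀) (hπ₁ : 0 ≤ π₁) (hπ : 0 < π₀ + π₁)
    (hF₀ : 0 ≤ F₀ t) (hF₁ : 0 ≤ F₁ t) (hS₀ : 0 ≤ S₀ (θ * t)) (hS₁ : 0 ≤ S₁ (θ * t))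
    (h1 : S₁ (θ * t) ≤ F₁ t) (h0 : S₀ (θ * t) ≤ θ * t * F₀ t)
    (hFpos : 0 < π₀ * F₀ t + π₁ * F₁ t) :
    π₀ * F₀ t / (π₀ * F₀ t + π₁ * F₁ t) ≤
      ((π₀ * F₀ t + π₁ * F₁ t) - (π₀ * S₀ (θ * t) + π₁ * S₁ (θ * t))) /
        ((1 - θ * t) * (π₀ * F₀ t + π₁ * F₁ t)) :=
  stmt_13_general θ t π₀ π₁ F₀ F₁ S₀ S₁ hθ ht hπ₀ hπ₁ h1 h0 hFpos
end
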